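/- Let x be a solution of the random time change equation and let F : ℝ^d → ℝ be continuously differentiable. Then for every t ≥ 0, denoting by J_t the (finite) set of discontinuity points of x in (0,t] and by x(s−) the left limit of x at s, one has the pathwise change-of-variables formula F(x(t)) − F(x(0)) = ∫_0^t DF(x(s))[f(x(s))] ds + Σ_{s∈J_t} (F(x(s)) − F(x(s−))), where DF(z)[v] denotes the derivative of F at z applied to the vector v. (Deterministic, pathwise core of the Itô formula of Lemma 2.3.) -/

import Mathlib

open MeasureTheory Filter

noncomputable section

/-- A counting function: nondecreasing, right-continuous `y : [0,∞) → ℕ` with `y 0 = 0`. -/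
def IsCountingFunction (y : ℝ → ℕ) : Prop :=
  MonotoneOn y (Set.Ici 0) ∧ y 0 = 0 ∧
    ∀ t : ℝ, 0 ≤ t → ContinuousWithinAt y (Set.Ici t) t

/-- Right-continuous on `[0,∞)` with left limits at every `t > 0`. -/
def IsCadlag {E : Type*} [TopologicalSpace E] (x : ℝ → E) : Prop :=
  (∀ t : ℝ, 0 ≤ t → ContinuousWithinAt x (Set.Ici t) t) ∧
  (∀ t : ℝ, 0 < t → ∃ L : E, Tendsto x (nhdsWithin t (Set.Iio t)) (nhds L))

/-- Solution of the random time change equation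
`x t = x₀ + ∫₀ᵗ f(x s) ds + ∑ₖ yₖ(∫₀ᵗ λₖ(x s) ds) • νₖ`. -/
def IsRTESolution {d p : ℕ} (f : EuclideanSpace ℝ (Fin d) → EuclideanSpace ℝ (Fin d))
    (lam : Fin p → EuclideanSpace ℝ (Fin d) → ℝ)
    (ν : Fin p → EuclideanSpace ℝ (Fin d))
    (y : Fin p → ℝ → ℕ) (x₀ : EuclideanSpace ℝ (Fin d))
    (x : ℝ → EuclideanSpace ℝ (Fin d)) : Prop :=
  IsCadlag x ∧ ∀ t : ℝ, 0 ≤ t →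
    x t = x₀ + (∫ s in (0:ℝ)..t, f (x s)) +
      ∑ k, ((y k (∫ s in (0:ℝ)..t, lam k (x s)) : ℝ)) • ν k

/-!
Between jump times a solution of the RTE follows the flow of `f`: the time changes
`r ↦ ∫₀ʳ λₖ(x s) ds` are continuous and nondecreasing and the counting functions are
right-continuous, so every counting term is constant on a right neighbourhood of each time, and
`x` has right derivative `f (x u)`. Hence
`g r = F (x r) - ∫₀ʳ DF(x s)[f(x s)] ds - ∑_{s ∈ J, s ≤ r} (F (x s) - F (x (s-)))`
has vanishing right derivative on `[0, t)`, and subtracting the jumps makes it left-continuous on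
`(0, t]`; so `g` is constant on `[0, t]`. Integrability comes for free: a càdlàg path is bounded
on compact intervals, so continuous functions of it are bounded there.
-/

open Set Topology

section JumpSum

variable {M : Type*} [AddCommMonoid M] (J : Finset ℝ) (u : ℝ)

lemma Finset.eventually_filter_le_eq_nhdsGE :
    ∀ᶠ r in 𝓝[≥] u, J.filter (· ≤ r) = J.filter (· ≤ u) := by
  have : ∀ᶠ r in 𝓝[≥] u, ∀ s ∈ J, (s ≤ r ↔ s ≤ u) := by
    refine (eventually_all_finset J).2 fun s _ => ?_
    rcases le_or_gt s u with hs | hs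
    · filter_upwards [self_mem_nhdsWithin] with r (hr : u ≤ r)
      exact iff_of_true (hs.trans hr) hs
    · filter_upwards [mem_nhdsWithin_of_mem_nhds (Iio_mem_nhds hs)] with r (hr : r < s)
      exact iff_of_false hr.not_ge hs.not_ge
  filter_upwards [this] with r hr using Finset.filter_congr hr

lemma Finset.eventually_filter_le_eq_nhdsLT :
    ∀ᶠ r in 𝓝[<] u, J.filter (· ≤ r) = J.filter (· < u) := by
  have : ∀ᶠ r in 𝓝[<] u, ∀ s ∈ J, (s ≤ r ↔ s < u) := by
    refine (eventually_all_finset J).2 fun s _ => ?_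
    rcases lt_or_ge s u with hs | hs
    · filter_upwards [mem_nhdsWithin_of_mem_nhds (Ioi_mem_nhds hs)] with r (hr : s < r)
      exact iff_of_true hr.le hs
    · filter_upwards [self_mem_nhdsWithin] with r (hr : r < u)
      exact iff_of_false (hr.trans_le hs).not_ge hs.not_gt
  filter_upwards [this] with r hr using Finset.filter_congr hr

lemma Finset.sum_filter_le_eq_sum_filter_lt_add (φ : ℝ → M) (hφ : u ∉ J → φ u = 0) :
    ∑ s ∈ J with s ≤ u, φ s = ∑ s ∈ J with s < u, φ s + φ u := by
  classical
  have hφ' : φ u = ∑ s ∈ J, if s = u then φ s else 0 := by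
    rw [Finset.sum_ite_eq']
    split_ifs with h
    exacts [rfl, hφ h]
  rw [hφ', Finset.sum_filter, Finset.sum_filter, ← Finset.sum_add_distrib]
  refine Finset.sum_congr rfl fun s _ => ?_
  rcases lt_trichotomy s u with h | rfl | h
  · simp [h, h.le, h.ne]
  · simp
  · simp [h.not_ge, h.not_gt, h.ne']

lemma Finset.hasDerivWithinAt_sum_filter_le {G : Type*} [NormedAddCommGroup G] [NormedSpace ℝ G]
    (φ : ℝ → G) : HasDerivWithinAt (fun r => ∑ s ∈ J with s ≤ r, φ s) 0 (Set.Ici u) u :=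
  (hasDerivWithinAt_const u _ _).congr_of_eventuallyEq
    (by filter_upwards [J.eventually_filter_le_eq_nhdsGE u] with r hr; rw [hr]) rfl

lemma Finset.tendsto_sum_filter_le_nhdsLT [TopologicalSpace M] (φ : ℝ → M) :
    Tendsto (fun r => ∑ s ∈ J with s ≤ r, φ s) (𝓝[<] u)
      (𝓝 (∑ s ∈ J with s < u, φ s)) :=
  tendsto_const_nhds.congr' (by
    filter_upwards [J.eventually_filter_le_eq_nhdsLT u] with r hr; rw [hr])

end JumpSum

lemma continuousOn_Icc_of_continuousWithinAt_Ici_Iio {X : Type*} [TopologicalSpace X]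
    {a b : ℝ} {g : ℝ → X}
    (hR : ∀ u ∈ Ico a b, ContinuousWithinAt g (Ici u) u)
    (hL : ∀ u ∈ Ioc a b, ContinuousWithinAt g (Iio u) u) : ContinuousOn g (Icc a b) := by
  intro u hu
  rw [← Ico_union_Icc_eq_Icc hu.1 hu.2]
  refine ContinuousWithinAt.union ?_ ?_
  · rcases hu.1.eq_or_lt with rfl | hau
    · simp [ContinuousWithinAt]
    · exact (hL u ⟨hau, hu.2⟩).mono fun r hr => hr.2
  · rcases hu.2.eq_or_lt with rfl | hub
    · simp
    · exact (hR u ⟨hu.1, hub⟩).mono fun r hr => hr.1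

section RightDerivative

variable {G : Type*} [NormedAddCommGroup G] [NormedSpace ℝ G] {a b : ℝ}

lemma eq_of_hasDerivWithinAt_Ici_zero {g : ℝ → G} (hab : a ≤ b)
    (hR : ∀ u ∈ Ico a b, HasDerivWithinAt g 0 (Ici u) u)
    (hL : ∀ u ∈ Ioc a b, ContinuousWithinAt g (Iio u) u) : g b = g a :=
  constant_of_has_deriv_right_zero
    (continuousOn_Icc_of_continuousWithinAt_Ici_Iio (fun u hu => (hR u hu).continuousWithinAt) hL)
    hR b (right_mem_Icc.2 hab)

lemma hasDerivWithinAt_integral_Ici [CompleteSpace G] {h : ℝ → G}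
    (hint : IntegrableOn h (Icc a b)) {u : ℝ} (hu : u ∈ Ico a b)
    (hc : ContinuousWithinAt h (Ici u) u) :
    HasDerivWithinAt (fun r => ∫ s in a..r, h s) (h u) (Ici u) u :=
  intervalIntegral.integral_hasDerivWithinAt_right
    (hint.mono_set (uIcc_subset_Icc (left_mem_Icc.2 (hu.1.trans hu.2.le))
      (Ico_subset_Icc_self hu))).intervalIntegrable
    ⟨Icc a b, nhdsWithin_mono _ Ioi_subset_Ici_self (Icc_mem_nhdsGE_of_mem hu),
      hint.aestronglyMeasurable⟩
    (hc.mono Ioi_subset_Ici_self)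

lemma tendsto_integral_nhdsLT {h : ℝ → G} (hint : IntegrableOn h (Icc a b)) {u : ℝ}
    (hu : u ∈ Ioc a b) :
    Tendsto (fun r => ∫ s in a..r, h s) (𝓝[<] u) (𝓝 (∫ s in a..u, h s)) := by
  have hcont := intervalIntegral.continuousOn_primitive_interval (a := a) (b := b)
    (by rwa [uIcc_of_le (hu.1.le.trans hu.2)])
  rw [uIcc_of_le (hu.1.le.trans hu.2)] at hcont
  exact (hcont u (Ioc_subset_Icc_self hu)).mono_of_mem_nhdsWithin (Icc_mem_nhdsLT_of_mem hu)

theorem sub_eq_integral_add_sum_jumps [CompleteSpace G] {h hm h' : ℝ → G} (hab : a ≤ b)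
    {J : Finset ℝ} (hJ : ↑J ⊆ Ioc a b) (hcont : ∀ s ∈ Ioc a b, s ∉ J → ContinuousAt h s)
    (hhm : ∀ s ∈ Ioc a b, Tendsto h (𝓝[<] s) (𝓝 (hm s)))
    (hderiv : ∀ s ∈ Ico a b, HasDerivWithinAt h (h' s) (Ici s) s)
    (hint : IntegrableOn h' (Icc a b)) (hc' : ∀ s ∈ Ico a b, ContinuousWithinAt h' (Ici s) s) :
    h b - h a = (∫ s in a..b, h' s) + ∑ s ∈ J, (h s - hm s) := by
  set S : ℝ → G := fun r => ∑ s ∈ J with s ≤ r, (h s - hm s)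
  have hR : ∀ u ∈ Ico a b,
      HasDerivWithinAt (fun r => h r - (∫ s in a..r, h' s) - S r) 0 (Ici u) u := by
    intro u hu
    have := ((hderiv u hu).sub (hasDerivWithinAt_integral_Ici hint hu (hc' u hu))).sub
      (J.hasDerivWithinAt_sum_filter_le u fun s => h s - hm s)
    rwa [sub_self, sub_zero] at this
  have hL : ∀ u ∈ Ioc a b,
      ContinuousWithinAt (fun r => h r - (∫ s in a..r, h' s) - S r) (Iio u) u := by
    intro u hu
    have hjump : S u = ∑ s ∈ J with s < u, (h s - hm s) + (h u - hm u) :=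
      J.sum_filter_le_eq_sum_filter_lt_add u _ fun huJ => by
        rw [tendsto_nhds_unique (hhm u hu) (hcont u hu huJ).continuousWithinAt.tendsto, sub_self]
    have hval : h u - (∫ s in a..u, h' s) - S u
        = hm u - (∫ s in a..u, h' s) - ∑ s ∈ J with s < u, (h s - hm s) := by
      rw [hjump]; abel
    rw [ContinuousWithinAt, hval]
    exact ((hhm u hu).sub (tendsto_integral_nhdsLT hint hu)).sub
      (J.tendsto_sum_filter_le_nhdsLT u fun s => h s - hm s)
  have hSa : S a = 0 := by
    simp only [S, Finset.filter_false_of_mem fun s hs => not_le.2 (hJ hs).1, Finset.sum_empty]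
  have hSb : S b = ∑ s ∈ J, (h s - hm s) := by
    simp only [S, Finset.filter_true_of_mem fun s hs => (hJ hs).2]
  have hconst := eq_of_hasDerivWithinAt_Ici_zero hab hR hL
  simp only [hSa, hSb, intervalIntegral.integral_same, sub_zero] at hconst
  rw [← hconst]
  abel

end RightDerivative

lemma Filter.Tendsto.exists_mem_isBounded_image {α E : Type*} [PseudoMetricSpace E] {x : α → E}
    {l : Filter α} {L : E} (h : Tendsto x l (𝓝 L)) :
    ∃ s ∈ l, Bornology.IsBounded (x '' s) :=
  ⟨x ⁻¹' Metric.ball L 1, h (Metric.ball_mem_nhds L one_pos),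
    Metric.isBounded_ball.subset (image_preimage_subset _ _)⟩

namespace IsCadlag

variable {E : Type*} [PseudoMetricSpace E] {x : ℝ → E}

lemma exists_mem_nhdsWithin_isBounded_image (hx : IsCadlag x) {u : ℝ} (hu : 0 ≤ u) :
    ∃ s ∈ 𝓝[Ici 0] u, Bornology.IsBounded (x '' s) := by
  obtain ⟨s₂, hs₂, hb₂⟩ := (hx.1 u hu).tendsto.exists_mem_isBounded_image
  rcases hu.eq_or_lt with rfl | hu
  · exact ⟨s₂, hs₂, hb₂⟩
  obtain ⟨L, hL⟩ := hx.2 u hu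
  obtain ⟨s₁, hs₁, hb₁⟩ := hL.exists_mem_isBounded_image
  refine ⟨s₁ ∪ s₂, nhdsWithin_le_nhds ?_, by rw [image_union]; exact hb₁.union hb₂⟩
  rw [← nhdsLT_sup_nhdsGE]
  exact union_mem_sup hs₁ hs₂

lemma isBounded_image (hx : IsCadlag x) {K : Set ℝ} (hK : IsCompact K) (hK0 : K ⊆ Ici 0) :
    Bornology.IsBounded (x '' K) :=
  hK.induction_on (p := fun s => Bornology.IsBounded (x '' s)) (by simp)
    (fun _ _ hst h => h.subset (image_mono hst))
    (fun _ _ hs ht => by rw [image_union]; exact hs.union ht)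
    fun u hu => by
      obtain ⟨s, hs, hb⟩ := hx.exists_mem_nhdsWithin_isBounded_image (hK0 hu)
      exact ⟨s, nhdsWithin_mono u hK0 hs, hb⟩

end IsCadlag

lemma ContinuousOn.aestronglyMeasurable_of_diff_countable {E : Type*} [TopologicalSpace E]
    [TopologicalSpace.PseudoMetrizableSpace E] {x : ℝ → E} {s N : Set ℝ}
    (hs : MeasurableSet s) {μ : Measure ℝ} [NullSingletonClass μ] (hN : N.Countable)
    (hx : ContinuousOn x (s \ N)) :
    AEStronglyMeasurable x (μ.restrict s) := by
  rw [← Measure.restrict_congr_set (sdiff_null_ae_eq_self (hN.measure_zero μ))]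
  exact hx.aestronglyMeasurable (hs.diff hN.measurableSet)

lemma IsCadlag.aestronglyMeasurable {E : Type*} [TopologicalSpace E]
    [TopologicalSpace.PseudoMetrizableSpace E] {x : ℝ → E} (hx : IsCadlag x) {t : ℝ}
    (hJ : {s ∈ Ioc 0 t | ¬ ContinuousAt x s}.Countable) :
    AEStronglyMeasurable x (volume.restrict (Icc 0 t)) := by
  refine ContinuousOn.aestronglyMeasurable_of_diff_countable measurableSet_Icc hJ fun u hu => ?_
  rcases hu.1.1.eq_or_lt with rfl | hu0
  · exact (hx.1 _ le_rfl).mono fun r hr => hr.1.1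
  · exact (not_not.1 fun hc => hu.2 ⟨⟨hu0, hu.1.2⟩, hc⟩).continuousWithinAt

lemma IsCadlag.integrableOn_comp {E V : Type*} [PseudoMetricSpace E] [ProperSpace E]
    [NormedAddCommGroup V] {x : ℝ → E} (hx : IsCadlag x) {t : ℝ}
    (hmeas : AEStronglyMeasurable x (volume.restrict (Icc 0 t))) {G : E → V} (hG : Continuous G) :
    IntegrableOn (G ∘ x) (Icc 0 t) := by
  obtain ⟨C, hC⟩ := ((hx.isBounded_image (isCompact_Icc (a := 0) (b := t))
    fun _ hu => hu.1).isCompact_closure.image hG).isBounded.exists_norm_le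
  refine .of_bound measure_Icc_lt_top (hG.comp_aestronglyMeasurable hmeas) C ?_
  exact (ae_restrict_iff' measurableSet_Icc).2 <| Eventually.of_forall fun u hu =>
    hC _ (mem_image_of_mem G (subset_closure (mem_image_of_mem x hu)))

lemma IsCadlag.hasDerivWithinAt_integral_comp {E V : Type*} [PseudoMetricSpace E] [ProperSpace E]
    [NormedAddCommGroup V] [NormedSpace ℝ V] [CompleteSpace V] {x : ℝ → E} (hx : IsCadlag x)
    {t : ℝ} (hmeas : AEStronglyMeasurable x (volume.restrict (Icc 0 t))) {G : E → V}
    (hG : Continuous G) {u : ℝ} (hu : u ∈ Ico 0 t) :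
    HasDerivWithinAt (fun r => ∫ s in (0:ℝ)..r, G (x s)) (G (x u)) (Ici u) u :=
  hasDerivWithinAt_integral_Ici (hx.integrableOn_comp hmeas hG) hu
    (hG.continuousAt.comp_continuousWithinAt (hx.1 u hu.1))

lemma monotoneOn_integral_of_nonneg {a b : ℝ} {h : ℝ → ℝ} (hint : IntegrableOn h (Icc a b))
    (h0 : ∀ s, 0 ≤ h s) : MonotoneOn (fun r => ∫ s in a..r, h s) (Icc a b) :=
  fun u hu r hr hur => intervalIntegral.integral_mono_interval le_rfl hu.1 hur
    (Eventually.of_forall fun s => h0 s)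
    (hint.mono_set (by rw [uIcc_of_le hr.1]; exact Icc_subset_Icc le_rfl hr.2)).intervalIntegrable

lemma eventually_comp_eq_nhdsGE {α : Type*} [TopologicalSpace α] [DiscreteTopology α]
    {y : ℝ → α} {τ : ℝ → ℝ} {u : ℝ} (hy : ContinuousWithinAt y (Ici (τ u)) (τ u))
    (hτ : ContinuousWithinAt τ (Ici u) u) (hmono : ∀ᶠ r in 𝓝[≥] u, τ u ≤ τ r) :
    ∀ᶠ r in 𝓝[≥] u, y (τ r) = y (τ u) := by
  have := hy.tendsto.comp (tendsto_nhdsWithin_iff.2 ⟨hτ.tendsto, hmono⟩)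
  rwa [nhds_discrete, tendsto_pure] at this

namespace IsRTESolution

variable {d p : ℕ} {f : EuclideanSpace ℝ (Fin d) → EuclideanSpace ℝ (Fin d)}
  {lam : Fin p → EuclideanSpace ℝ (Fin d) → ℝ} {ν : Fin p → EuclideanSpace ℝ (Fin d)}
  {y : Fin p → ℝ → ℕ} {x₀ : EuclideanSpace ℝ (Fin d)}
  {x : ℝ → EuclideanSpace ℝ (Fin d)}

lemma hasDerivWithinAt_Ici (hx : IsRTESolution f lam ν y x₀ x) (hf : Continuous f)
    (hlam : ∀ k, Continuous (lam k)) (hlam0 : ∀ k z, 0 ≤ lam k z)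
    (hy : ∀ k, IsCountingFunction (y k)) {t : ℝ}
    (hmeas : AEStronglyMeasurable x (volume.restrict (Icc 0 t))) {u : ℝ} (hu : u ∈ Ico 0 t) :
    HasDerivWithinAt x (f (x u)) (Ici u) u := by
  have hcount : ∀ᶠ r in 𝓝[≥] u, ∀ k, y k (∫ s in (0:ℝ)..r, lam k (x s))
      = y k (∫ s in (0:ℝ)..u, lam k (x s)) := by
    refine eventually_all.2 fun k => eventually_comp_eq_nhdsGE ((hy k).2.2 _ ?_)
      (hx.1.hasDerivWithinAt_integral_comp hmeas (hlam k) hu).continuousWithinAt ?_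
    · exact intervalIntegral.integral_nonneg hu.1 fun s _ => hlam0 k (x s)
    · filter_upwards [Icc_mem_nhdsGE_of_mem hu, self_mem_nhdsWithin] with r hr hur
      exact monotoneOn_integral_of_nonneg (hx.1.integrableOn_comp hmeas (hlam k))
        (fun s => hlam0 k (x s)) (Ico_subset_Icc_self hu) hr hur
  have hflow : x =ᶠ[𝓝[≥] u] fun r => x₀ + (∫ s in (0:ℝ)..r, f (x s)) +
      ∑ k, ((y k (∫ s in (0:ℝ)..u, lam k (x s)) : ℝ)) • ν k := by
    filter_upwards [hcount, self_mem_nhdsWithin] with r hr hur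
    simp only [hx.2 r (hu.1.trans hur), hr]
  exact (((hx.1.hasDerivWithinAt_integral_comp hmeas hf hu).const_add x₀).add_const _)
    |>.congr_of_eventuallyEq hflow (hx.2 u hu.1)

end IsRTESolution


theorem rte_change_of_variables_general (d p : ℕ)
    (ν : Fin p → EuclideanSpace ℝ (Fin d))
    (f : EuclideanSpace ℝ (Fin d) → EuclideanSpace ℝ (Fin d))
    (hf_lip : ∃ K : NNReal, LipschitzWith K f)
    (lam : Fin p → EuclideanSpace ℝ (Fin d) → ℝ)
    (hlam_lip : ∀ k, ∃ K : NNReal, LipschitzWith K (lam k))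
    (hlam_nonneg : ∀ k z, 0 ≤ lam k z)
    (y : Fin p → ℝ → ℕ) (hy : ∀ k, IsCountingFunction (y k))
    (x₀ : EuclideanSpace ℝ (Fin d)) (x : ℝ → EuclideanSpace ℝ (Fin d))
    (hx : IsRTESolution f lam ν y x₀ x)
    (F : EuclideanSpace ℝ (Fin d) → ℝ) (hF : ContDiff ℝ 1 F)
    (t : ℝ) (ht : 0 ≤ t)
    (hJfin : ({s ∈ Set.Ioc 0 t | ¬ ContinuousAt x s}).Finite)
    (xm : ℝ → EuclideanSpace ℝ (Fin d))
    (hxm : ∀ s : ℝ, 0 < s → Tendsto x (nhdsWithin s (Set.Iio s)) (nhds (xm s))) :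
    F (x t) - F (x 0)
      = (∫ s in (0:ℝ)..t, fderiv ℝ F (x s) (f (x s)))
        + ∑ s ∈ hJfin.toFinset, (F (x s) - F (xm s)) := by
  have hf : Continuous f := hf_lip.choose_spec.continuous
  have hlam : ∀ k, Continuous (lam k) := fun k => (hlam_lip k).choose_spec.continuous
  have hmeas := hx.1.aestronglyMeasurable hJfin.countable
  have hDF : Continuous fun z => fderiv ℝ F z (f z) :=
    (hF.continuous_fderiv one_ne_zero).clm_apply hf
  refine sub_eq_integral_add_sum_jumps (h := F ∘ x) (hm := F ∘ xm) ht
    (fun s hs => (hJfin.mem_toFinset.1 hs).1) ?_ ?_ ?_ (hx.1.integrableOn_comp hmeas hDF) ?_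
  · intro s hs hsJ
    exact hF.continuous.continuousAt.comp
      (not_not.1 fun hc => hsJ (hJfin.mem_toFinset.2 ⟨hs, hc⟩))
  · exact fun s hs => (hF.continuous.tendsto _).comp (hxm s hs.1)
  · exact fun s hs => ((hF.differentiable one_ne_zero _).hasFDerivAt).comp_hasDerivWithinAt s
      (hx.hasDerivWithinAt_Ici hf hlam hlam_nonneg hy hmeas hs)
  · exact fun s hs => hDF.continuousAt.comp_continuousWithinAt (hx.1.1 s hs.1)

/-- Pathwise change-of-variables (Itô) formula for solutions of the RTE. -/
theorem rte_change_of_variables (d p : ℕ)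
    (ν : Fin p → EuclideanSpace ℝ (Fin d))
    (f : EuclideanSpace ℝ (Fin d) → EuclideanSpace ℝ (Fin d))
    (hf_lip : ∃ K : NNReal, LipschitzWith K f)
    (hf_bdd : ∃ B : ℝ, ∀ z, ‖f z‖ ≤ B)
    (lam : Fin p → EuclideanSpace ℝ (Fin d) → ℝ)
    (hlam_lip : ∀ k, ∃ K : NNReal, LipschitzWith K (lam k))
    (hlam_bdd : ∀ k, ∃ B : ℝ, ∀ z, lam k z ≤ B)
    (hlam_nonneg : ∀ k z, 0 ≤ lam k z)
    (y : Fin p → ℝ → ℕ) (hy : ∀ k, IsCountingFunction (y k))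
    (x₀ : EuclideanSpace ℝ (Fin d)) (x : ℝ → EuclideanSpace ℝ (Fin d))
    (hx : IsRTESolution f lam ν y x₀ x)
    (F : EuclideanSpace ℝ (Fin d) → ℝ) (hF : ContDiff ℝ 1 F)
    (t : ℝ) (ht : 0 ≤ t)
    (hJfin : ({s ∈ Set.Ioc 0 t | ¬ ContinuousAt x s}).Finite)
    (xm : ℝ → EuclideanSpace ℝ (Fin d))
    (hxm : ∀ s : ℝ, 0 < s → Tendsto x (nhdsWithin s (Set.Iio s)) (nhds (xm s))) :
    F (x t) - F (x 0)
      = (∫ s in (0:ℝ)..t, fderiv ℝ F (x s) (f (x s)))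
        + ∑ s ∈ hJfin.toFinset, (F (x s) - F (xm s)) :=
  rte_change_of_variables_general d p ν f hf_lip lam hlam_lip hlam_nonneg y hy x₀ x hx F hF t ht
    hJfin xm hxm
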